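/- Let a, b : ℕ → ℕ be finitely supported sequences of nonnegative integers, neither identically zero, and χ, N ∈ ℤ with χ ≤ 2, N ≥ 0, satisfying 2·Σ_k (1-k)·a_k = 2·Σ_k (1-k)·b_k = χ + N. Then either there exists a pair (a', b') of the same kind with strictly smaller value of N + Σ_k a'_k + Σ_k b'_k satisfying the analogous conditions for some (χ', N'), or one of the base cases holds: (a and b are supported only at 0 with χ = 2), or (a_0 = b_0 = 0 with N = 0). -/
import Mathlib


/-- The weighted sum `Σ_k (1-k)·a_k` of a finitely supported sequence, valued in `ℤ`. -/
def wsum (a : ℕ →₀ ℕ) : ℤ := a.sum fun k v => (1 - (k : ℤ)) * v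

/-- The size `Σ_k a_k` of a finitely supported sequence, in `ℤ`. -/
def tsize (a : ℕ →₀ ℕ) : ℤ := a.sum fun _ v => (v : ℤ)

lemma wsum_add (a g : ℕ →₀ ℕ) : wsum (a + g) = wsum a + wsum g := by
  unfold wsum
  exact Finsupp.sum_add_index' (by simp) (fun i b₁ b₂ => by push_cast; ring)

lemma tsize_add (a g : ℕ →₀ ℕ) : tsize (a + g) = tsize a + tsize g := by
  unfold tsize
  exact Finsupp.sum_add_index' (by simp) (fun i b₁ b₂ => by push_cast; ring)

lemma wsum_single (k n : ℕ) : wsum (Finsupp.single k n) = (1 - (k : ℤ)) * n := by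
  unfold wsum; rw [Finsupp.sum_single_index]; simp

lemma tsize_single (k n : ℕ) : tsize (Finsupp.single k n) = n := by
  unfold tsize; rw [Finsupp.sum_single_index]; rfl

lemma wsum_sub_single (a : ℕ →₀ ℕ) (k n : ℕ) (h : n ≤ a k) :
    wsum (a - Finsupp.single k n) = wsum a - (1 - (k : ℤ)) * n := by
  have hle : Finsupp.single k n ≤ a := Finsupp.single_le_iff.2 h
  have h2 := wsum_add (a - Finsupp.single k n) (Finsupp.single k n)
  rw [tsub_add_cancel_of_le hle, wsum_single] at h2
  linarith

lemma tsize_sub_single (a : ℕ →₀ ℕ) (k n : ℕ) (h : n ≤ a k) :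
    tsize (a - Finsupp.single k n) = tsize a - n := by
  have hle : Finsupp.single k n ≤ a := Finsupp.single_le_iff.2 h
  have h2 := tsize_add (a - Finsupp.single k n) (Finsupp.single k n)
  rw [tsub_add_cancel_of_le hle, tsize_single] at h2
  linarith

/-- If `a 0 = 0` then the weighted sum is nonpositive. -/
lemma wsum_nonpos (a : ℕ →₀ ℕ) (h : a 0 = 0) : wsum a ≤ 0 := by
  unfold wsum Finsupp.sum
  apply Finset.sum_nonpos
  intro k hk
  rcases Nat.eq_zero_or_pos k with h0 | h1
  · subst h0; simp [h]
  · apply mul_nonpos_of_nonpos_of_nonneg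
    · have : (1 : ℤ) ≤ (k : ℤ) := by exact_mod_cast h1
      linarith
    · positivity

/-- If `a` is supported only at `0` then `wsum a = a 0`. -/
lemma wsum_of_only_zero (a : ℕ →₀ ℕ) (h : ∀ k, 1 ≤ k → a k = 0) : wsum a = a 0 := by
  have ha : a = Finsupp.single 0 (a 0) := by
    ext k
    rcases Nat.eq_zero_or_pos k with h0 | h1
    · subst h0; simp
    · rw [h k h1, Finsupp.single_apply]
      have : ¬ (0 = k) := by omega
      simp [this]
  rw [ha, wsum_single]
  simp

/-- The reduction operation: remove one unit from position `0` and shift one unit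
from position `r` to position `r-1`. This keeps `wsum` fixed and drops `tsize` by one. -/
lemma reduce_exists (a : ℕ →₀ ℕ) (r : ℕ) (hr : 1 ≤ r) (h0 : a 0 ≠ 0) (hrr : a r ≠ 0) :
    ∃ a' : ℕ →₀ ℕ, a' ≠ 0 ∧ wsum a' = wsum a ∧ tsize a' = tsize a - 1 := by
  have h0' : 1 ≤ a 0 := Nat.one_le_iff_ne_zero.2 h0
  have hr0 : (0 : ℕ) ≠ r := by omega
  set a1 := a - Finsupp.single 0 1 with ha1
  have ha1r : a1 r = a r := by
    rw [ha1, Finsupp.tsub_apply, Finsupp.single_apply]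
    simp [hr0]
  have hrr' : 1 ≤ a1 r := by rw [ha1r]; exact Nat.one_le_iff_ne_zero.2 hrr
  set a2 := a1 - Finsupp.single r 1 with ha2
  refine ⟨a2 + Finsupp.single (r - 1) 1, ?_, ?_, ?_⟩
  · intro hzero
    have h := DFunLike.congr_fun hzero (r - 1)
    rw [Finsupp.add_apply, Finsupp.single_apply] at h
    simp at h
  · rw [wsum_add, wsum_single, ha2, wsum_sub_single _ _ _ hrr', ha1,
      wsum_sub_single _ _ _ h0']
    have hcast : ((r - 1 : ℕ) : ℤ) = (r : ℤ) - 1 := by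
      have : (1 : ℤ) ≤ (r : ℤ) := by exact_mod_cast hr
      push_cast [hr]; ring
    rw [hcast]; push_cast; ring
  · rw [tsize_add, tsize_single, ha2, tsize_sub_single _ _ _ hrr', ha1,
      tsize_sub_single _ _ _ h0']
    push_cast; ring

/-- The induction structure of the realization proof: either the data can be reduced to
data of the same kind with strictly smaller measure `N + Σ a_k + Σ b_k`, or one of the
base cases holds (both sequences supported only at `0` with `χ = 2`, or
`a_0 = b_0 = 0` with `N = 0`). -/
theorem realization_induction_step (a b : ℕ →₀ ℕ) (χ N : ℤ)
    (ha : a ≠ 0) (hb : b ≠ 0)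
    (hχ : χ ≤ 2) (hN : 0 ≤ N)
    (hsa : 2 * wsum a = χ + N) (hsb : 2 * wsum b = χ + N) :
    (∃ (a' b' : ℕ →₀ ℕ) (χ' N' : ℤ),
        a' ≠ 0 ∧ b' ≠ 0 ∧ χ' ≤ 2 ∧ 0 ≤ N' ∧
        2 * wsum a' = χ' + N' ∧ 2 * wsum b' = χ' + N' ∧
        N' + tsize a' + tsize b' < N + tsize a + tsize b) ∨
    ((∀ k, 1 ≤ k → a k = 0 ∧ b k = 0) ∧ χ = 2) ∨
    (a 0 = 0 ∧ b 0 = 0 ∧ N = 0) := by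
  by_cases h1 : a 0 ≠ 0 ∧ ∃ r, 1 ≤ r ∧ a r ≠ 0
  · obtain ⟨h0, r, hr, hrr⟩ := h1
    obtain ⟨a', ha', hw, ht⟩ := reduce_exists a r hr h0 hrr
    exact Or.inl ⟨a', b, χ, N, ha', hb, hχ, hN, by rw [hw]; exact hsa, hsb, by linarith⟩
  by_cases h2 : b 0 ≠ 0 ∧ ∃ r, 1 ≤ r ∧ b r ≠ 0
  · obtain ⟨h0, r, hr, hrr⟩ := h2
    obtain ⟨b', hb', hw, ht⟩ := reduce_exists b r hr h0 hrr
    exact Or.inl ⟨a, b', χ, N, ha, hb', hχ, hN, hsa, by rw [hw]; exact hsb, by linarith⟩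
  push_neg at h1 h2
  by_cases ha0 : a 0 = 0
  · -- wsum a ≤ 0, so χ + N ≤ 0
    have hwa : wsum a ≤ 0 := wsum_nonpos a ha0
    have hχN : χ + N ≤ 0 := by linarith
    by_cases hb0 : b 0 = 0
    · by_cases hN0 : N = 0
      · exact Or.inr (Or.inr ⟨ha0, hb0, hN0⟩)
      · refine Or.inl ⟨a, b, χ + 1, N - 1, ha, hb, by linarith, ?_, by linarith, by linarith, by linarith⟩
        have : 1 ≤ N := lt_of_le_of_ne hN (Ne.symm hN0)
        linarith
    · -- b supported only at 0, wsum b = b 0 ≥ 1, contradiction with χ + N ≤ 0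
      have hbonly := h2 hb0
      have hwb : wsum b = b 0 := wsum_of_only_zero b hbonly
      have hb1 : 1 ≤ b 0 := Nat.one_le_iff_ne_zero.2 hb0
      have : (1 : ℤ) ≤ b 0 := by exact_mod_cast hb1
      linarith
  · -- a supported only at 0
    have haonly := h1 ha0
    have hwa : wsum a = a 0 := wsum_of_only_zero a haonly
    have ha1 : 1 ≤ a 0 := Nat.one_le_iff_ne_zero.2 ha0
    have ha1' : (1 : ℤ) ≤ a 0 := by exact_mod_cast ha1
    have hχN : 2 ≤ χ + N := by linarith
    have hb0 : b 0 ≠ 0 := by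
      intro hb0
      have := wsum_nonpos b hb0
      linarith
    have hbonly := h2 hb0
    by_cases hχ2 : χ = 2
    · exact Or.inr (Or.inl ⟨fun k hk => ⟨haonly k hk, hbonly k hk⟩, hχ2⟩)
    · have hχlt : χ < 2 := lt_of_le_of_ne hχ hχ2
      exact Or.inl ⟨a, b, 2, χ + N - 2, ha, hb, le_refl 2, by linarith, by linarith,
        by linarith, by linarith⟩
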